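/- arXiv:0805.0278 — 4 statements merged into one kernel-verified Lean document; each statement's English description precedes it below -/
import Mathlib

section
/- Let a ≤ b be integers and g : ℤ → ℝ. Suppose that ∑_{t=a}^{b-1} g(t) · (η(t+1) - η(t)) = 0 for every function η : ℤ → ℝ with η(a) = η(b) = 0. Then g is constant on {a, a+1, …, b-1}. -/
theorem discrete_duBois_Reymond (a b : ℤ) (hab : a ≤ b) (g : ℤ → ℝ)
    (h : ∀ η : ℤ → ℝ, η a = 0 → η b = 0 →
      ∑ t ∈ Finset.Ico a b, g t * (η (t + 1) - η t) = 0) :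
    ∃ c : ℝ, ∀ t ∈ Finset.Ico a b, g t = c := by
  refine ⟨g a, fun s hs => ?_⟩
  rw [Finset.mem_Ico] at hs
  obtain ⟨has, hsb⟩ := hs
  rcases eq_or_lt_of_le has with rfl | has
  · rfl
  · set η : ℤ → ℝ := fun t => if a < t ∧ t ≤ s then (1 : ℝ) else 0 with hη
    have hηa : η a = 0 := by simp [hη]
    have hηb : η b = 0 := by simp [hη]; intro h'; omega
    have key := h η hηa hηb
    have hpt : ∀ t ∈ Finset.Ico a b,
        g t * (η (t + 1) - η t)
          = (if t = a then g a else 0) + (if t = s then -(g s) else 0) := by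
      intro t ht
      rw [Finset.mem_Ico] at ht
      simp only [hη]
      split_ifs
      all_goals subst_vars
      all_goals try (exfalso; omega)
      all_goals ring
    rw [Finset.sum_congr rfl hpt, Finset.sum_add_distrib,
      Finset.sum_ite_eq' _ a, Finset.sum_ite_eq' _ s] at key
    simp only [Finset.mem_Ico] at key
    rw [if_pos ⟨le_refl a, by omega⟩, if_pos ⟨has.le, hsb⟩] at key
    linarith
end

section
/- Let g : [a,b] → ℝ be continuous with a < b real numbers. Suppose ∫_a^b g(t) · η'(t) dt = 0 for every continuously differentiable η : [a,b] → ℝ with η(a) = η(b) = 0. Then g is constant on [a,b]. -/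
open Set MeasureTheory intervalIntegral

theorem continuous_duBois_Reymond (a b : ℝ) (hab : a < b) (g : ℝ → ℝ)
    (hg : ContinuousOn g (Set.Icc a b))
    (h : ∀ η : ℝ → ℝ, ContDiff ℝ 1 η → η a = 0 → η b = 0 →
      ∫ t in a..b, g t * deriv η t = 0) :
    ∃ c : ℝ, ∀ t ∈ Set.Icc a b, g t = c := by
  set c : ℝ := (∫ t in a..b, g t) / (b - a) with hc
  refine ⟨c, ?_⟩
  have huIcc : Set.uIcc a b = Set.Icc a b := Set.uIcc_of_le hab.le
  have hgi : IntervalIntegrable g volume a b := by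
    apply ContinuousOn.intervalIntegrable; rwa [huIcc]
  -- clamped extension of g
  set G : ℝ → ℝ := fun t => g (max a (min b t)) with hG
  have hmem : ∀ t, max a (min b t) ∈ Set.Icc a b := fun t =>
    ⟨le_max_left _ _, max_le hab.le (min_le_left _ _)⟩
  have hGcont : Continuous G := by
    apply hg.comp_continuous
    · exact continuous_const.max (continuous_const.min continuous_id)
    · exact hmem
  have hGeq : ∀ t ∈ Set.Icc a b, G t = g t := by
    intro t ht
    simp only [hG]
    rw [min_eq_right ht.2, max_eq_right ht.1]
  -- η
  set η : ℝ → ℝ := fun x => ∫ s in a..x, (G s - c) with hη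
  have hd : ∀ x, HasDerivAt η (G x - c) x := fun x =>
    ((hGcont.sub continuous_const).integral_hasStrictDerivAt a x).hasDerivAt
  have hderiv : deriv η = fun x => G x - c := funext fun x => (hd x).deriv
  have hηC : ContDiff ℝ 1 η := by
    rw [contDiff_one_iff_deriv]
    exact ⟨fun x => (hd x).differentiableAt, by rw [hderiv]; exact hGcont.sub continuous_const⟩
  have hgc0 : ∫ t in a..b, (g t - c) = 0 := by
    have hbne : b - a ≠ 0 := sub_ne_zero.mpr hab.ne'
    have hcm : c * (b - a) = ∫ t in a..b, g t := div_mul_cancel₀ _ hbne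
    rw [intervalIntegral.integral_sub hgi (intervalIntegrable_const),
      intervalIntegral.integral_const, smul_eq_mul]
    linarith
  have hηa : η a = 0 := intervalIntegral.integral_same
  have hηb : η b = 0 := by
    show (∫ s in a..b, (G s - c)) = 0
    rw [intervalIntegral.integral_congr (g := fun t => g t - c) ?_]
    · exact hgc0
    · intro t ht; rw [huIcc] at ht; simp [hGeq t ht]
  have h0 := h η hηC hηa hηb
  rw [hderiv] at h0
  have h1 : ∫ t in a..b, g t * (g t - c) = 0 := by
    rw [← h0]
    apply intervalIntegral.integral_congr
    intro t ht; rw [huIcc] at ht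
    simp [hGeq t ht]
  have hgci : IntervalIntegrable (fun t => g t - c) volume a b :=
    hgi.sub intervalIntegrable_const
  have hsqi : IntervalIntegrable (fun t => (g t - c) ^ 2) volume a b := by
    apply ContinuousOn.intervalIntegrable; rw [huIcc]
    exact (hg.sub continuousOn_const).pow 2
  have hsq : ∫ t in a..b, (g t - c) ^ 2 = 0 := by
    have : ∀ t, (g t - c) ^ 2 = g t * (g t - c) - c * (g t - c) := by intro t; ring
    simp_rw [this]
    rw [intervalIntegral.integral_sub (by
        have : (fun t => g t * (g t - c)) = fun t => g t * g t - g t * c := by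
          funext t; ring
        rw [this]
        exact (hgi.mul_continuousOn (by rwa [huIcc])).sub (hgi.mul_const c))
      (hgci.const_mul c), h1, intervalIntegral.integral_const_mul, hgc0]
    ring
  -- conclude g = c on Icc
  have hnn : (0 : ℝ → ℝ) ≤ᵐ[volume.restrict (Set.Ioc a b)] fun t => (g t - c) ^ 2 :=
    Filter.Eventually.of_forall fun t => sq_nonneg _
  have hae : (fun t => (g t - c) ^ 2) =ᵐ[volume.restrict (Set.Ioc a b)] 0 :=
    (intervalIntegral.integral_eq_zero_iff_of_le_of_nonneg_ae hab.le hnn hsqi).mp hsq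
  have haeIcc : (fun t => (g t - c) ^ 2) =ᵐ[volume.restrict (Set.Icc a b)] 0 := by
    rwa [← Measure.restrict_congr_set MeasureTheory.Ioc_ae_eq_Icc]
  have heq : Set.EqOn (fun t => (g t - c) ^ 2) 0 (Set.Icc a b) := by
    refine Measure.eqOn_of_ae_eq haeIcc ((hg.sub continuousOn_const).pow 2)
      continuousOn_const ?_
    rw [interior_Icc, closure_Ioo hab.ne]
  intro t ht
  have := heq ht
  simp only [Pi.zero_apply] at this
  have := (pow_eq_zero_iff two_ne_zero).mp this
  linarith
end

section
/- Let L, g : [a,b] × ℝ × ℝ → ℝ be C¹ in all variables, with a < b real. Define J(y) = ∫_a^b L(t, y(t), y'(t)) dt and I(y) = ∫_a^b g(t, y(t), y'(t)) dt for y ∈ C¹([a,b]). Suppose y⋆ ∈ C¹([a,b]) is a local minimizer of J among curves with y(a) = y_a, y(b) = y_b, and I(y) = l, and suppose y⋆ is not an extremal of I, i.e., the function t ↦ g_v(t, y⋆(t), y⋆'(t)) - ∫_a^t g_x(τ, y⋆(τ), y⋆'(τ)) dτ is not constant on [a,b]. Then there exists λ ∈ ℝ such that F(t,x,v) = L(t,x,v)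 - λ g(t,x,v) satisfies the integral Euler–Lagrange equation: there is a constant d with F_v(t, y⋆(t), y⋆'(t)) - ∫_a^t F_x(τ, y⋆(τ), y⋆'(τ)) dτ = d for all t ∈ [a,b]. -/
/-
Perturb `y⋆` to `y⋆ + ε₁ η₁ + ε₂ η₂` with `η₁, η₂` vanishing at the endpoints. Along this
two-parameter family both `J` and `I` are strictly differentiable at `ε = 0`, and after an
integration by parts their partial derivatives are `∫ (F_v - ∫ F_x) ηᵢ'` for `F = L` and `F = g`.
Since `J` restricted to the level set of `I` has a local minimum at `0`, the finite-dimensional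
Lagrange multiplier rule makes the two gradients linearly dependent. Because `y⋆` is not an
extremal of `I`, the du Bois-Reymond lemma provides an `η₁` with `∫ (g_v - ∫ g_x) η₁' ≠ 0`; this
fixes `λ` independently of `η₂`. So `∫ (F_v - ∫ F_x) η' = 0` for `F = L - λ g` and every admissible
`η`, and the du Bois-Reymond lemma once more shows that `F_v - ∫ F_x` is constant.
-/

open MeasureTheory Set Filter Topology

noncomputable section

theorem IsCompact.eventually_forall_lt_of_continuous {X Y : Type*} [TopologicalSpace X]
    [TopologicalSpace Y] {K : Set Y} (hK : IsCompact K) {φ : X × Y → ℝ} (hφ : Continuous φ)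
    {x₀ : X} {c : ℝ} (h : ∀ y ∈ K, φ (x₀, y) < c) : ∀ᶠ x in 𝓝 x₀, ∀ y ∈ K, φ (x, y) < c :=
  hK.eventually_forall_of_forall_eventually fun y hy =>
    hφ.continuousAt.eventually_lt continuousAt_const (h y hy)

theorem hasStrictFDerivAt_intervalIntegral_of_continuous {H E : Type*} [NormedAddCommGroup H]
    [NormedSpace ℝ H] [NormedAddCommGroup E] [NormedSpace ℝ E] [CompleteSpace E]
    {f : H → ℝ → E} {f' : H → ℝ → H →L[ℝ] E} (hf : Continuous (Function.uncurry f))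
    (hf' : Continuous (Function.uncurry f')) (hderiv : ∀ x t, HasFDerivAt (f · t) (f' x t) x)
    (a b : ℝ) (x₀ : H) :
    HasStrictFDerivAt (fun x => ∫ t in a..b, f x t) (∫ t in a..b, f' x₀ t) x₀ := by
  have hasFDerivAt (x : H) :
      HasFDerivAt (fun x => ∫ t in a..b, f x t) (∫ t in a..b, f' x t) x := by
    obtain ⟨M, hM⟩ := isCompact_uIcc.exists_bound_of_continuousOn
      (hf'.comp (Continuous.prodMk_right x)).continuousOn
    have hbound : ∀ᶠ z in 𝓝 x, ∀ t ∈ uIcc a b, ‖f' z t‖ < M + 1 :=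
      isCompact_uIcc.eventually_forall_lt_of_continuous hf'.norm
        fun t ht => (hM t ht).trans_lt (lt_add_one M)
    refine intervalIntegral.hasFDerivAt_integral_of_dominated_of_fderiv_le
      (bound := fun _ => M + 1) hbound
      (Eventually.of_forall fun z => (hf.comp (Continuous.prodMk_right z)).aestronglyMeasurable)
      ((hf.comp (Continuous.prodMk_right x)).intervalIntegrable a b)
      (hf'.comp (Continuous.prodMk_right x)).aestronglyMeasurable
      (Eventually.of_forall fun t ht z hz => (hz t (uIoc_subset_uIcc ht)).le)
      intervalIntegrable_const
      (Eventually.of_forall fun t _ z _ => hderiv z t)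
  exact hasStrictFDerivAt_of_hasFDerivAt_of_continuousAt (Eventually.of_forall hasFDerivAt)
    (intervalIntegral.continuous_parametric_intervalIntegral_of_continuous' hf' a b).continuousAt

theorem hasStrictFDerivAt_intervalIntegral_comp_add_apply {H V E : Type*} [NormedAddCommGroup H]
    [NormedSpace ℝ H] [NormedAddCommGroup V] [NormedSpace ℝ V] [NormedAddCommGroup E]
    [NormedSpace ℝ E] [CompleteSpace E] {Φ : V → E} (hΦ : ContDiff ℝ 1 Φ) {p : ℝ → V}
    (hp : Continuous p) {m : ℝ → H →L[ℝ] V} (hm : Continuous m) (a b : ℝ) (x₀ : H) :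
    HasStrictFDerivAt (fun x => ∫ t in a..b, Φ (p t + m t x))
      (∫ t in a..b, (fderiv ℝ Φ (p t + m t x₀)).comp (m t)) x₀ := by
  have hpm : Continuous fun q : H × ℝ => p q.2 + m q.2 q.1 :=
    (hp.comp continuous_snd).add ((hm.comp continuous_snd).clm_apply continuous_fst)
  refine hasStrictFDerivAt_intervalIntegral_of_continuous (f := fun x t => Φ (p t + m t x))
    (f' := fun x t => (fderiv ℝ Φ (p t + m t x)).comp (m t)) (hΦ.continuous.comp hpm)
    (((hΦ.continuous_fderiv one_ne_zero).comp hpm).clm_comp (hm.comp continuous_snd))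
    (fun x t => ?_) a b x₀
  exact ((hΦ.differentiable one_ne_zero _).hasFDerivAt).comp x ((m t).hasFDerivAt.const_add (p t))

theorem integral_mul_add_mul_deriv_eq_integral_sub_primitive_mul_deriv {fx fv η : ℝ → ℝ}
    {a b : ℝ} (hfx : Continuous fx) (hfv : Continuous fv) (hη : ContDiff ℝ 1 η) (ha : η a = 0)
    (hb : η b = 0) :
    ∫ t in a..b, (fx t * η t + fv t * deriv η t) =
      ∫ t in a..b, (fv t - ∫ τ in a..t, fx τ) * deriv η t := by
  have hηc : Continuous η := hη.continuous
  have hη' : Continuous (deriv η) := hη.continuous_deriv le_rfl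
  have hA : Continuous fun t => ∫ τ in a..t, fx τ :=
    intervalIntegral.continuous_primitive hfx.intervalIntegrable a
  have hparts : ∫ t in a..b, (∫ τ in a..t, fx τ) * deriv η t = -∫ t in a..b, fx t * η t := by
    have := intervalIntegral.integral_mul_deriv_eq_deriv_mul
      (fun t _ => (hfx.integral_hasStrictDerivAt a t).hasDerivAt)
      (fun t _ => (hη.differentiable one_ne_zero t).hasDerivAt)
      (hfx.intervalIntegrable a b) (hη'.intervalIntegrable a b)
    simpa [ha, hb] using this
  simp only [sub_mul]
  have hfxη : Continuous fun t => fx t * η t := by fun_prop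
  have hfvη : Continuous fun t => fv t * deriv η t := by fun_prop
  have hAη : Continuous fun t => (∫ τ in a..t, fx τ) * deriv η t := by fun_prop
  rw [intervalIntegral.integral_add (hfxη.intervalIntegrable a b) (hfvη.intervalIntegrable a b),
    intervalIntegral.integral_sub (hfvη.intervalIntegrable a b) (hAη.intervalIntegrable a b),
    hparts]
  ring

theorem exists_const_of_forall_integral_mul_deriv_eq_zero {h : ℝ → ℝ} {a b : ℝ}
    (hh : Continuous h) (hab : a < b)
    (H : ∀ η : ℝ → ℝ, ContDiff ℝ 1 η → η a = 0 → η b = 0 → ∫ t in a..b, h t * deriv η t = 0) :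
    ∃ d, ∀ t ∈ Icc a b, h t = d := by
  set c := (∫ t in a..b, h t) / (b - a)
  have hhc : Continuous fun t => h t - c := hh.sub continuous_const
  set η : ℝ → ℝ := fun t => ∫ s in a..t, (h s - c)
  have hη' : deriv η = fun t => h t - c := funext (hhc.deriv_integral _ a)
  have hη : ContDiff ℝ 1 η := contDiff_one_iff_deriv.mpr
    ⟨fun t => (hhc.integral_hasStrictDerivAt a t).hasDerivAt.differentiableAt, hη' ▸ hhc⟩
  have hηb : η b = 0 := by
    simp only [η, c, intervalIntegral.integral_sub (hh.intervalIntegrable a b)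
      intervalIntegrable_const, intervalIntegral.integral_const, smul_eq_mul]
    field_simp [sub_ne_zero.mpr hab.ne']
    ring
  have hsq : ∫ t in a..b, (h t - c) ^ 2 = 0 := calc
    _ = (∫ t in a..b, h t * deriv η t) - c * η b := by
      rw [hη', ← intervalIntegral.integral_const_mul, ← intervalIntegral.integral_sub
        ((by fun_prop : Continuous fun t => h t * (h t - c)).intervalIntegrable a b)
        ((by fun_prop : Continuous fun t => c * (h t - c)).intervalIntegrable a b)]
      congr 1; funext t; ring
    _ = 0 := by rw [H η hη intervalIntegral.integral_same hηb, hηb]; ring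
  refine ⟨c, fun t ht => by_contra fun hne => ?_⟩
  have hpos := intervalIntegral.integral_lt_integral_of_continuousOn_of_le_of_exists_lt hab
    continuousOn_const (hhc.pow 2).continuousOn (fun x _ => sq_nonneg (h x - c))
    ⟨t, ht, lt_of_le_of_ne (sq_nonneg _) (pow_ne_zero 2 (sub_ne_zero.mpr hne)).symm⟩
  simp [hsq] at hpos

def uncurry₃ {α β γ δ : Type*} (F : α → β → γ → δ) (p : α × β × γ) : δ := F p.1 p.2.1 p.2.2

section Partials

variable {F : ℝ → ℝ → ℝ → ℝ}

def partialX (F : ℝ → ℝ → ℝ → ℝ) (y : ℝ → ℝ) (t : ℝ) : ℝ :=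
  deriv (fun x => F t x (deriv y t)) (y t)

def partialV (F : ℝ → ℝ → ℝ → ℝ) (y : ℝ → ℝ) (t : ℝ) : ℝ :=
  deriv (fun v => F t (y t) v) (deriv y t)

def duBoisReymondFun (F : ℝ → ℝ → ℝ → ℝ) (a : ℝ) (y : ℝ → ℝ) (t : ℝ) : ℝ :=
  partialV F y t - ∫ τ in a..t, partialX F y τ

theorem deriv_slice_snd_eq_fderiv_uncurry₃ {t x v : ℝ}
    (hF : DifferentiableAt ℝ (uncurry₃ F) (t, x, v)) :
    deriv (fun x => F t x v) x = fderiv ℝ (uncurry₃ F) (t, x, v) (0, 1, 0) :=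
  (hF.hasFDerivAt.comp_hasDerivAt x <| (hasDerivAt_const x t).prodMk <|
    (hasDerivAt_id' x).prodMk (hasDerivAt_const x v) :).deriv

theorem deriv_slice_thd_eq_fderiv_uncurry₃ {t x v : ℝ}
    (hF : DifferentiableAt ℝ (uncurry₃ F) (t, x, v)) :
    deriv (fun v => F t x v) v = fderiv ℝ (uncurry₃ F) (t, x, v) (0, 0, 1) :=
  (hF.hasFDerivAt.comp_hasDerivAt v <| (hasDerivAt_const v t).prodMk <|
    (hasDerivAt_const v x).prodMk (hasDerivAt_id' v) :).deriv

theorem fderiv_uncurry₃_apply_zero_mk {t x v : ℝ}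
    (hF : DifferentiableAt ℝ (uncurry₃ F) (t, x, v)) (u w : ℝ) :
    fderiv ℝ (uncurry₃ F) (t, x, v) (0, u, w) =
      deriv (fun x => F t x v) x * u + deriv (fun v => F t x v) v * w := by
  have hdecomp : ((0, u, w) : ℝ × ℝ × ℝ) = u • (0, 1, 0) + w • (0, 0, 1) := by simp
  rw [deriv_slice_snd_eq_fderiv_uncurry₃ hF, deriv_slice_thd_eq_fderiv_uncurry₃ hF, hdecomp,
    map_add, map_smul, map_smul, smul_eq_mul, smul_eq_mul, mul_comm u, mul_comm w]

variable {y : ℝ → ℝ}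

theorem continuous_jet (hy : ContDiff ℝ 1 y) :
    Continuous fun t => ((t, y t, deriv y t) : ℝ × ℝ × ℝ) :=
  continuous_id.prodMk (hy.continuous.prodMk (hy.continuous_deriv le_rfl))

theorem continuous_partialX (hF : ContDiff ℝ 1 (uncurry₃ F)) (hy : ContDiff ℝ 1 y) :
    Continuous (partialX F y) := by
  have h (t : ℝ) : partialX F y t = fderiv ℝ (uncurry₃ F) (t, y t, deriv y t) (0, 1, 0) :=
    deriv_slice_snd_eq_fderiv_uncurry₃ (hF.differentiable one_ne_zero _)
  simp only [funext h]
  exact ((hF.continuous_fderiv one_ne_zero).comp (continuous_jet hy)).clm_apply continuous_const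

theorem continuous_partialV (hF : ContDiff ℝ 1 (uncurry₃ F)) (hy : ContDiff ℝ 1 y) :
    Continuous (partialV F y) := by
  have h (t : ℝ) : partialV F y t = fderiv ℝ (uncurry₃ F) (t, y t, deriv y t) (0, 0, 1) :=
    deriv_slice_thd_eq_fderiv_uncurry₃ (hF.differentiable one_ne_zero _)
  simp only [funext h]
  exact ((hF.continuous_fderiv one_ne_zero).comp (continuous_jet hy)).clm_apply continuous_const

theorem continuous_duBoisReymondFun (hF : ContDiff ℝ 1 (uncurry₃ F)) (hy : ContDiff ℝ 1 y)
    (a : ℝ) : Continuous (duBoisReymondFun F a y) :=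
  (continuous_partialV hF hy).sub
    (intervalIntegral.continuous_primitive (continuous_partialX hF hy).intervalIntegrable a)

end Partials

def action (F : ℝ → ℝ → ℝ → ℝ) (a b : ℝ) (y : ℝ → ℝ) : ℝ :=
  ∫ t in a..b, F t (y t) (deriv y t)

def perturb (y η₁ η₂ : ℝ → ℝ) (ε : ℝ × ℝ) (t : ℝ) : ℝ := y t + ε.1 * η₁ t + ε.2 * η₂ t

section Perturb

variable {y η₁ η₂ : ℝ → ℝ}

@[simp]
theorem perturb_zero : perturb y η₁ η₂ 0 = y := by
  funext t; simp [perturb]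

theorem contDiff_perturb {n : WithTop ℕ∞} (hy : ContDiff ℝ n y) (hη₁ : ContDiff ℝ n η₁)
    (hη₂ : ContDiff ℝ n η₂) (ε : ℝ × ℝ) : ContDiff ℝ n (perturb y η₁ η₂ ε) :=
  (hy.add (contDiff_const.mul hη₁)).add (contDiff_const.mul hη₂)

theorem deriv_perturb (hy : Differentiable ℝ y) (hη₁ : Differentiable ℝ η₁)
    (hη₂ : Differentiable ℝ η₂) (ε : ℝ × ℝ) :
    deriv (perturb y η₁ η₂ ε) = perturb (deriv y) (deriv η₁) (deriv η₂) ε :=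
  funext fun t => (((hy t).hasDerivAt.add ((hη₁ t).hasDerivAt.const_mul ε.1)).add
    ((hη₂ t).hasDerivAt.const_mul ε.2)).deriv

theorem eventually_forall_perturb_close (hy : ContDiff ℝ 1 y) (hη₁ : ContDiff ℝ 1 η₁)
    (hη₂ : ContDiff ℝ 1 η₂) {K : Set ℝ} (hK : IsCompact K) {r : ℝ} (hr : 0 < r) :
    ∀ᶠ ε in 𝓝 0, ∀ t ∈ K,
      |perturb y η₁ η₂ ε t - y t| + |deriv (perturb y η₁ η₂ ε) t - deriv y t| < r := by
  have hη₁c := hη₁.continuous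
  have hη₂c := hη₂.continuous
  have hη₁' := hη₁.continuous_deriv le_rfl
  have hη₂' := hη₂.continuous_deriv le_rfl
  have hsmall := hK.eventually_forall_lt_of_continuous (x₀ := (0 : ℝ × ℝ))
    (φ := fun p => |p.1.1 * η₁ p.2 + p.1.2 * η₂ p.2| +
      |p.1.1 * deriv η₁ p.2 + p.1.2 * deriv η₂ p.2|) (by fun_prop) (fun t _ => by simpa using hr)
  filter_upwards [hsmall] with ε hε t ht
  rw [deriv_perturb (hy.differentiable one_ne_zero) (hη₁.differentiable one_ne_zero)
    (hη₂.differentiable one_ne_zero)]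
  simpa only [perturb, add_assoc, add_sub_cancel_left] using hε t ht

end Perturb

section FirstVariation

variable {F : ℝ → ℝ → ℝ → ℝ} {a b : ℝ} {y η η₁ η₂ : ℝ → ℝ}

theorem integral_fderiv_jet_apply_eq_integral_duBoisReymondFun_mul_deriv
    (hF : ContDiff ℝ 1 (uncurry₃ F)) (hy : ContDiff ℝ 1 y) (hη : ContDiff ℝ 1 η)
    (ha : η a = 0) (hb : η b = 0) :
    ∫ t in a..b, fderiv ℝ (uncurry₃ F) (t, y t, deriv y t) (0, η t, deriv η t) =
      ∫ t in a..b, duBoisReymondFun F a y t * deriv η t := by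
  simp_rw [fderiv_uncurry₃_apply_zero_mk (hF.differentiable one_ne_zero _)]
  exact integral_mul_add_mul_deriv_eq_integral_sub_primitive_mul_deriv
    (continuous_partialX hF hy) (continuous_partialV hF hy) hη ha hb

theorem hasStrictFDerivAt_action_perturb (hF : ContDiff ℝ 1 (uncurry₃ F))
    (hy : ContDiff ℝ 1 y) (hη₁ : ContDiff ℝ 1 η₁) (hη₂ : ContDiff ℝ 1 η₂)
    (hη₁a : η₁ a = 0) (hη₁b : η₁ b = 0) (hη₂a : η₂ a = 0) (hη₂b : η₂ b = 0) :
    HasStrictFDerivAt (fun ε => action F a b (perturb y η₁ η₂ ε))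
      ((∫ t in a..b, duBoisReymondFun F a y t * deriv η₁ t) • ContinuousLinearMap.fst ℝ ℝ ℝ +
        (∫ t in a..b, duBoisReymondFun F a y t * deriv η₂ t) • ContinuousLinearMap.snd ℝ ℝ ℝ)
      0 := by
  set jet : ℝ → ℝ × ℝ × ℝ := fun t => (t, y t, deriv y t)
  set dir : (ℝ → ℝ) → ℝ → ℝ × ℝ × ℝ := fun η t => (0, η t, deriv η t)
  set m : ℝ → ℝ × ℝ →L[ℝ] ℝ × ℝ × ℝ := fun t =>
    (ContinuousLinearMap.fst ℝ ℝ ℝ).smulRight (dir η₁ t) +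
      (ContinuousLinearMap.snd ℝ ℝ ℝ).smulRight (dir η₂ t)
  have hdir : ∀ {η : ℝ → ℝ}, ContDiff ℝ 1 η → Continuous (dir η) := fun hη =>
    continuous_const.prodMk (hη.continuous.prodMk (hη.continuous_deriv le_rfl))
  have hdir₁ := hdir hη₁
  have hdir₂ := hdir hη₂
  have hm_apply (t : ℝ) (ε : ℝ × ℝ) : m t ε = ε.1 • dir η₁ t + ε.2 • dir η₂ t := rfl
  have hm : Continuous m := continuous_clm_apply.mpr fun ε => by
    simp only [hm_apply]; fun_prop
  have hvar := hasStrictFDerivAt_intervalIntegral_comp_add_apply hF (continuous_jet hy) hm a b 0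
  have hfun : (fun ε => action F a b (perturb y η₁ η₂ ε)) =
      fun ε => ∫ t in a..b, uncurry₃ F (jet t + m t ε) := by
    funext ε
    simp only [action, deriv_perturb (hy.differentiable one_ne_zero)
      (hη₁.differentiable one_ne_zero) (hη₂.differentiable one_ne_zero)]
    congr 1; funext t
    simp only [uncurry₃, perturb, jet, hm_apply, dir, Prod.smul_mk, smul_eq_mul, Prod.mk_add_mk,
      mul_zero, add_zero, add_assoc]
  have hX (η : ℝ → ℝ) (hη : ContDiff ℝ 1 η) :
      Continuous fun t => fderiv ℝ (uncurry₃ F) (jet t) (dir η t) :=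
    ((hF.continuous_fderiv one_ne_zero).comp (continuous_jet hy)).clm_apply (hdir hη)
  have hderiv :
      (∫ t in a..b, duBoisReymondFun F a y t * deriv η₁ t) • ContinuousLinearMap.fst ℝ ℝ ℝ +
        (∫ t in a..b, duBoisReymondFun F a y t * deriv η₂ t) • ContinuousLinearMap.snd ℝ ℝ ℝ =
      ∫ t in a..b, (fderiv ℝ (uncurry₃ F) (jet t + m t 0)).comp (m t) := by
    refine ContinuousLinearMap.ext fun ε => ?_
    simp only [map_zero, add_zero]
    have hint : IntervalIntegrable (fun t => (fderiv ℝ (uncurry₃ F) (jet t)).comp (m t)) volume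
        a b :=
      (((hF.continuous_fderiv one_ne_zero).comp (continuous_jet hy)).clm_comp hm).intervalIntegrable
        a b
    rw [ContinuousLinearMap.intervalIntegral_apply hint]
    simp only [ContinuousLinearMap.comp_apply, hm_apply, map_add, map_smul, smul_eq_mul]
    rw [intervalIntegral.integral_add (((hX η₁ hη₁).const_mul ε.1).intervalIntegrable a b)
      (((hX η₂ hη₂).const_mul ε.2).intervalIntegrable a b), intervalIntegral.integral_const_mul,
      intervalIntegral.integral_const_mul,
      integral_fderiv_jet_apply_eq_integral_duBoisReymondFun_mul_deriv hF hy hη₁ hη₁a hη₁b,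
      integral_fderiv_jet_apply_eq_integral_duBoisReymondFun_mul_deriv hF hy hη₂ hη₂a hη₂b]
    simp [mul_comm]
  rw [hfun, hderiv]
  exact hvar

end FirstVariation

theorem isLocalMinOn_action_perturb {L g : ℝ → ℝ → ℝ → ℝ} {a b r : ℝ} {y η₁ η₂ : ℝ → ℝ}
    (hy : ContDiff ℝ 1 y) (hη₁ : ContDiff ℝ 1 η₁) (hη₂ : ContDiff ℝ 1 η₂)
    (hη₁a : η₁ a = 0) (hη₁b : η₁ b = 0) (hη₂a : η₂ a = 0) (hη₂b : η₂ b = 0) (hr : 0 < r)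
    (hmin : ∀ z : ℝ → ℝ, ContDiff ℝ 1 z → z a = y a → z b = y b →
      action g a b z = action g a b y →
      (∀ t ∈ Icc a b, |z t - y t| + |deriv z t - deriv y t| < r) →
      action L a b y ≤ action L a b z) :
    IsLocalMinOn (fun ε => action L a b (perturb y η₁ η₂ ε))
      {ε | action g a b (perturb y η₁ η₂ ε) = action g a b (perturb y η₁ η₂ 0)} 0 := by
  filter_upwards [nhdsWithin_le_nhds (eventually_forall_perturb_close hy hη₁ hη₂ isCompact_Icc hr),
    self_mem_nhdsWithin] with ε hclose hconstr
  rw [perturb_zero] at hconstr ⊢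
  exact hmin _ (contDiff_perturb hy hη₁ hη₂ ε) (by simp [perturb, hη₁a, hη₂a])
    (by simp [perturb, hη₁b, hη₂b]) hconstr hclose

theorem eq_div_mul_of_smul_add_smul_eq_zero {α β G₁ G₂ L₁ L₂ : ℝ} (hαβ : (α, β) ≠ 0)
    (hG₁ : G₁ ≠ 0)
    (h : α • (G₁ • ContinuousLinearMap.fst ℝ ℝ ℝ + G₂ • ContinuousLinearMap.snd ℝ ℝ ℝ) +
      β • (L₁ • ContinuousLinearMap.fst ℝ ℝ ℝ + L₂ • ContinuousLinearMap.snd ℝ ℝ ℝ) = 0) :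
    L₂ = L₁ / G₁ * G₂ := by
  have h₁ : α * G₁ + β * L₁ = 0 := by simpa using congr($h (1, 0))
  have h₂ : α * G₂ + β * L₂ = 0 := by simpa using congr($h (0, 1))
  have hβ : β ≠ 0 := by
    rintro rfl
    simp_all
  rw [div_mul_eq_mul_div, eq_div_iff hG₁]
  refine mul_left_cancel₀ hβ ?_
  linear_combination G₁ * h₂ - G₂ * h₁

theorem partialV_sub_mul_sub_integral_eq_duBoisReymondFun_sub_mul {L g : ℝ → ℝ → ℝ → ℝ}
    {y : ℝ → ℝ} (hL : ContDiff ℝ 1 (uncurry₃ L)) (hg : ContDiff ℝ 1 (uncurry₃ g))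
    (hy : ContDiff ℝ 1 y) (a lam t : ℝ) :
    (partialV L y t - lam * partialV g y t) -
        ∫ τ in a..t, (partialX L y τ - lam * partialX g y τ) =
      duBoisReymondFun L a y t - lam * duBoisReymondFun g a y t := by
  rw [intervalIntegral.integral_sub ((continuous_partialX hL hy).intervalIntegrable a t)
    (((continuous_partialX hg hy).const_mul lam).intervalIntegrable a t),
    intervalIntegral.integral_const_mul]
  simp only [duBoisReymondFun]
  ring

end

theorem isoperimetric_necessary_condition_R
    (a b l ya yb : ℝ) (hab : a < b)
    (L g : ℝ → ℝ → ℝ → ℝ)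
    (hL : ContDiff ℝ 1 (fun p : ℝ × ℝ × ℝ => L p.1 p.2.1 p.2.2))
    (hg : ContDiff ℝ 1 (fun p : ℝ × ℝ × ℝ => g p.1 p.2.1 p.2.2))
    (ystar : ℝ → ℝ) (hystar : ContDiff ℝ 1 ystar)
    (hba : ystar a = ya) (hbb : ystar b = yb)
    (hI : (∫ t in a..b, g t (ystar t) (deriv ystar t)) = l)
    (hmin : ∃ ε > (0 : ℝ), ∀ y : ℝ → ℝ, ContDiff ℝ 1 y →
      y a = ya → y b = yb →
      (∫ t in a..b, g t (y t) (deriv y t)) = l →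
      (∀ t ∈ Set.Icc a b, |y t - ystar t| + |deriv y t - deriv ystar t| < ε) →
      (∫ t in a..b, L t (ystar t) (deriv ystar t)) ≤ ∫ t in a..b, L t (y t) (deriv y t))
    (hnotext : ¬ ∃ c : ℝ, ∀ t ∈ Set.Icc a b,
      deriv (fun v => g t (ystar t) v) (deriv ystar t) -
        (∫ τ in a..t, deriv (fun x => g τ x (deriv ystar τ)) (ystar τ)) = c) :
    ∃ lam d : ℝ, ∀ t ∈ Set.Icc a b,
      (deriv (fun v => L t (ystar t) v) (deriv ystar t) -
        lam * deriv (fun v => g t (ystar t) v) (deriv ystar t)) -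
      (∫ τ in a..t, (deriv (fun x => L τ x (deriv ystar τ)) (ystar τ) -
        lam * deriv (fun x => g τ x (deriv ystar τ)) (ystar τ))) = d := by
  subst hba hbb hI
  obtain ⟨r, hr, hmin⟩ := hmin
  have hG := continuous_duBoisReymondFun hg hystar a
  have hL' := continuous_duBoisReymondFun hL hystar a
  obtain ⟨η₁, hη₁, hη₁a, hη₁b, hG₁⟩ : ∃ η₁ : ℝ → ℝ, ContDiff ℝ 1 η₁ ∧ η₁ a = 0 ∧ η₁ b = 0 ∧
      ∫ t in a..b, duBoisReymondFun g a ystar t * deriv η₁ t ≠ 0 := by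
    by_contra! h
    exact hnotext (exists_const_of_forall_integral_mul_deriv_eq_zero hG hab h)
  set lam := (∫ t in a..b, duBoisReymondFun L a ystar t * deriv η₁ t) /
    ∫ t in a..b, duBoisReymondFun g a ystar t * deriv η₁ t
  have hEL (η : ℝ → ℝ) (hη : ContDiff ℝ 1 η) (hηa : η a = 0) (hηb : η b = 0) :
      ∫ t in a..b, (duBoisReymondFun L a ystar t - lam * duBoisReymondFun g a ystar t) *
        deriv η t = 0 := by
    obtain ⟨α, β, hαβ, hmult⟩ := IsLocalExtrOn.exists_multipliers_of_hasStrictFDerivAt_1d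
      (Or.inl (isLocalMinOn_action_perturb hystar hη₁ hη hη₁a hη₁b hηa hηb hr hmin))
      (hasStrictFDerivAt_action_perturb hg hystar hη₁ hη hη₁a hη₁b hηa hηb)
      (hasStrictFDerivAt_action_perturb hL hystar hη₁ hη hη₁a hη₁b hηa hηb)
    have hη' := hη.continuous_deriv le_rfl
    have hLη : Continuous fun t => duBoisReymondFun L a ystar t * deriv η t := by fun_prop
    have hGη : Continuous fun t => lam * (duBoisReymondFun g a ystar t * deriv η t) := by fun_prop
    simp only [sub_mul, mul_assoc]
    rw [intervalIntegral.integral_sub (hLη.intervalIntegrable a b) (hGη.intervalIntegrable a b),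
      intervalIntegral.integral_const_mul, eq_div_mul_of_smul_add_smul_eq_zero hαβ hG₁ hmult,
      sub_self]
  obtain ⟨d, hd⟩ :=
    exists_const_of_forall_integral_mul_deriv_eq_zero (hL'.sub (hG.const_mul lam)) hab hEL
  exact ⟨lam, d, fun t ht =>
    (partialV_sub_mul_sub_integral_eq_duBoisReymondFun_sub_mul hL hg hystar a lam t).trans
      (hd t ht)⟩
end

section
/- Let g : ℤ → ℝ and a < b integers. If the function E(t) = g(t) - c is not identically zero on {a,…,b-1} for every constant c (i.e., g is not constant on {a,…,b-1}), then there exists η : ℤ → ℝ with η(a) = η(b) = 0 such that ∑_{t=a}^{b-1} g(t) · (η(t+1) - η(t)) ≠ 0. -/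
/-! A non-constant `g` jumps at some `k` with `a < k < b`; the spike `η = Pi.single k 1` vanishes
at `a` and `b`, and against it the sum picks out exactly the jump `g (k - 1) - g k`. -/

open Finset

lemma exists_pred_ne_of_not_const_Ico {α : Type*} {a b : ℤ} {g : ℤ → α}
    (hg : ¬ ∃ c, ∀ t ∈ Ico a b, g t = c) : ∃ k, a < k ∧ k < b ∧ g (k - 1) ≠ g k := by
  contrapose! hg
  refine ⟨g a, fun t ht => ?_⟩
  obtain ⟨hat, htb⟩ := mem_Ico.mp ht
  induction t, hat using Int.leInduction with
  | base => rfl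
  | succ n han ih =>
    rw [← hg (n + 1) (by omega) htb, add_sub_cancel_right]
    exact ih (mem_Ico.mpr ⟨han, by omega⟩) (by omega)

lemma sum_Ico_mul_sub_piSingle {R : Type*} [Ring R] (g : ℤ → R) {a b k : ℤ}
    (hak : a < k) (hkb : k < b) :
    ∑ t ∈ Ico a b, g t * ((Pi.single k 1 : ℤ → R) (t + 1) - (Pi.single k 1 : ℤ → R) t) =
      g (k - 1) - g k := by
  have hshift (t : ℤ) : (Pi.single k 1 : ℤ → R) (t + 1) = (Pi.single (k - 1) 1 : ℤ → R) t := by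
    simp only [Pi.single_apply, ← eq_sub_iff_add_eq]
  simp only [hshift, mul_sub, sum_sub_distrib, Pi.single_apply, mul_ite, mul_one, mul_zero,
    sum_ite_eq', mem_Ico]
  rw [if_pos (by omega), if_pos (by omega)]

theorem discrete_duBois_Reymond_contrapositive_general (a b : ℤ) (g : ℤ → ℝ)
    (hg : ¬ ∃ c : ℝ, ∀ t ∈ Finset.Ico a b, g t = c) :
    ∃ η : ℤ → ℝ, η a = 0 ∧ η b = 0 ∧
      ∑ t ∈ Finset.Ico a b, g t * (η (t + 1) - η t) ≠ 0 := by
  obtain ⟨k, hak, hkb, hne⟩ := exists_pred_ne_of_not_const_Ico hg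
  refine ⟨Pi.single k 1, Pi.single_eq_of_ne hak.ne 1, Pi.single_eq_of_ne hkb.ne' 1, ?_⟩
  rw [sum_Ico_mul_sub_piSingle g hak hkb]
  exact sub_ne_zero.mpr hne

theorem discrete_duBois_Reymond_contrapositive (a b : ℤ) (hab : a < b) (g : ℤ → ℝ)
    (hg : ¬ ∃ c : ℝ, ∀ t ∈ Finset.Ico a b, g t = c) :
    ∃ η : ℤ → ℝ, η a = 0 ∧ η b = 0 ∧
      ∑ t ∈ Finset.Ico a b, g t * (η (t + 1) - η t) ≠ 0 :=
  discrete_duBois_Reymond_contrapositive_general a b g hg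
end
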